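/- For every natural number N, the function c ↦ ∫_{−∞}^{∞} e^{−c·cosh y}·cosh y · dy − √(2π/c)·e^{−c}·Σ_{n=0}^{N} (−1)^n·((2n−1)!!)²/(n!·8^n·c^n)·(1 + (2n+1)/(2c)) is O(e^{−c}·c^{−N−3/2}) as c → +∞ along the reals. -/

import Mathlib

open MeasureTheory Asymptotics Filter

/-- The odd double factorial `(2n−1)!! = (2n)!/(2ⁿ·n!)`, with `(−1)!! = 1`. -/
noncomputable def oddDoubleFactorial (n : ℕ) : ℝ :=
  (Nat.factorial (2 * n) : ℝ) / (2 ^ n * (Nat.factorial n : ℝ))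

open Set Real
open scoped Nat

/-! Substituting `t = cosh y - 1` turns the integral into
`2 e^{-c} ∫₀^∞ e^{-ct} (t^{-1/2} + t^{1/2}) (2 + t)^{-1/2} dt`. The binomial expansion of
`(2 + t)^{-1/2} = 2^{-1/2} (1 + t/2)^{-1/2}` has, for `t ≥ 0`, truncation error bounded by its
first omitted term, so Watson's lemma integrates it term by term against `t^{s-1} e^{-ct}`
(`s = 1/2, 3/2`), with an error of the order of the first omitted Gamma term. Since
`Γ(k + 1/2) = (2k-1)!! √π / 2^k` and `Γ(k + 3/2) = (k + 1/2) Γ(k + 1/2)`, the two families of terms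
are the two summands of `1 + (2n+1)/(2c)`. -/

/-- `negBinomCoeff a k` is `(-a).choose k`, the coefficient of `x ^ k` in `(1 + x) ^ (-a)`. -/
noncomputable def negBinomCoeff (a : ℝ) (k : ℕ) : ℝ :=
  (-1) ^ k * (∏ i ∈ Finset.range k, (a + i)) / k.factorial

noncomputable def negBinomPoly (a : ℝ) (m : ℕ) (x : ℝ) : ℝ :=
  ∑ k ∈ Finset.range m, negBinomCoeff a k * x ^ k

lemma negBinomCoeff_zero (a : ℝ) : negBinomCoeff a 0 = 1 := by
  simp [negBinomCoeff]

lemma succ_mul_negBinomCoeff_succ (a : ℝ) (k : ℕ) :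
    (k + 1) * negBinomCoeff a (k + 1) = -a * negBinomCoeff (a + 1) k := by
  have hprod :
      ∏ i ∈ Finset.range k, (a + (i + 1 : ℕ)) = ∏ i ∈ Finset.range k, (a + 1 + i) :=
    Finset.prod_congr rfl fun i _ => by push_cast; ring
  have hk : (k.factorial : ℝ) ≠ 0 := by positivity
  rw [negBinomCoeff, negBinomCoeff, Finset.prod_range_succ', hprod, Nat.factorial_succ]
  push_cast
  field_simp
  ring

lemma hasDerivAt_negBinomPoly (a : ℝ) (m : ℕ) (x : ℝ) :
    HasDerivAt (negBinomPoly a (m + 1)) (-a * negBinomPoly (a + 1) m x) x := by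
  have h : HasDerivAt (negBinomPoly a (m + 1))
      (∑ k ∈ Finset.range (m + 1), negBinomCoeff a k * (k * x ^ (k - 1))) x := by
    unfold negBinomPoly
    exact HasDerivAt.fun_sum fun k _ => (hasDerivAt_pow k x).const_mul (negBinomCoeff a k)
  refine h.congr_deriv ?_
  rw [Finset.sum_range_succ', negBinomPoly, Finset.mul_sum]
  simp only [Nat.cast_zero, zero_mul, mul_zero, add_zero, Nat.cast_succ, Nat.add_sub_cancel]
  refine Finset.sum_congr rfl fun k _ => ?_
  rw [← mul_assoc (-a), ← succ_mul_negBinomCoeff_succ]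
  ring

lemma hasDerivAt_one_add_rpow {p x : ℝ} (hx : 0 ≤ x) :
    HasDerivAt (fun y => (1 + y) ^ p) (p * (1 + x) ^ (p - 1)) x := by
  simpa using ((hasDerivAt_id' x).const_add 1).rpow_const (p := p) (.inl (by linarith))

lemma abs_one_add_rpow_neg_sub_negBinomPoly_le (m : ℕ) {a x : ℝ} (ha : 0 < a) (hx : 0 ≤ x) :
    |(1 + x) ^ (-a) - negBinomPoly a m x| ≤ |negBinomCoeff a m| * x ^ m := by
  induction m generalizing a x with
  | zero =>
    simp only [negBinomPoly, Finset.range_zero, Finset.sum_empty, sub_zero, negBinomCoeff_zero,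
      pow_zero, mul_one, abs_one]
    rw [abs_of_nonneg (by positivity)]
    exact rpow_le_one_of_one_le_of_nonpos (by linarith) (by linarith)
  | succ m ih =>
    -- The remainder vanishes at `0` and its derivative is `-a` times the remainder for `a + 1`.
    have hderiv : ∀ y ∈ Ico 0 x, HasDerivAt (fun y => (1 + y) ^ (-a) - negBinomPoly a (m + 1) y)
        (-a * ((1 + y) ^ (-(a + 1)) - negBinomPoly (a + 1) m y)) y := by
      intro y hy
      refine ((hasDerivAt_one_add_rpow hy.1).sub (hasDerivAt_negBinomPoly a m y)).congr_deriv ?_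
      rw [show -a - 1 = -(a + 1) by ring]
      ring
    refine image_norm_le_of_norm_deriv_right_le_deriv_boundary (a := 0) (b := x)
      (B := fun y => |negBinomCoeff a (m + 1)| * y ^ (m + 1))
      (B' := fun y => a * (|negBinomCoeff (a + 1) m| * y ^ m)) ?_
      (fun y hy => (hderiv y hy).hasDerivWithinAt) ?_ ?_ ?_ ⟨hx, le_rfl⟩
    · intro y hy
      exact ((hasDerivAt_one_add_rpow hy.1).continuousAt.sub
        (hasDerivAt_negBinomPoly a m y).continuousAt).continuousWithinAt
    · simp [negBinomPoly, Finset.sum_range_succ', negBinomCoeff_zero]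
    · intro y
      have habs := congrArg abs (succ_mul_negBinomCoeff_succ a m)
      rw [abs_mul, abs_mul, abs_neg, abs_of_pos ha, abs_of_pos (by positivity)] at habs
      refine ((hasDerivAt_pow (m + 1) y).const_mul |negBinomCoeff a (m + 1)|).congr_deriv ?_
      rw [Nat.add_sub_cancel, ← mul_assoc a, ← habs]
      push_cast
      ring
    · intro y hy
      rw [norm_mul, norm_neg, Real.norm_of_nonneg ha.le, Real.norm_eq_abs]
      exact mul_le_mul_of_nonneg_left (ih (by linarith) hy.1) ha.le

lemma oddDoubleFactorial_eq_doubleFactorial (k : ℕ) : oddDoubleFactorial k = (2 * k - 1)‼ := by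
  rw [oddDoubleFactorial]
  rcases k with _ | k
  · simp
  have h : (2 * (k + 1)).factorial = 2 ^ (k + 1) * (k + 1).factorial * (2 * k + 1)‼ := by
    rw [← Nat.doubleFactorial_two_mul, show 2 * (k + 1) = 2 * k + 1 + 1 by ring,
      Nat.factorial_eq_mul_doubleFactorial]
  rw [h, show 2 * (k + 1) - 1 = 2 * k + 1 by omega]
  push_cast
  field_simp

lemma Gamma_nat_add_half_eq (k : ℕ) :
    Gamma (k + 1 / 2) = oddDoubleFactorial k * √π / 2 ^ k := by
  rw [Real.Gamma_nat_add_half, oddDoubleFactorial_eq_doubleFactorial]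

lemma prod_range_add_mul_Gamma {a : ℝ} (ha : 0 < a) (k : ℕ) :
    (∏ i ∈ Finset.range k, (a + i)) * Gamma a = Gamma (a + k) := by
  induction k with
  | zero => simp
  | succ k ih =>
    rw [Finset.prod_range_succ, mul_right_comm, ih, Nat.cast_succ, ← add_assoc,
      Gamma_add_one (by positivity)]
    ring

lemma negBinomCoeff_one_half (k : ℕ) :
    negBinomCoeff (1 / 2) k = (-1) ^ k * oddDoubleFactorial k / (2 ^ k * k !) := by
  have hprod := prod_range_add_mul_Gamma one_half_pos k
  rw [Gamma_one_half_eq, add_comm, Gamma_nat_add_half_eq] at hprod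
  have hπ : √π ≠ 0 := by positivity
  rw [negBinomCoeff, mul_right_cancel₀ hπ (hprod.trans (div_mul_eq_mul_div _ _ _).symm)]
  field_simp

lemma integrableOn_rpow_mul_exp_neg_mul {a c : ℝ} (ha : 0 < a) (hc : 0 < c) :
    IntegrableOn (fun t => t ^ (a - 1) * exp (-(c * t))) (Ioi 0) :=
  .of_integral_ne_zero (by rw [integral_rpow_mul_exp_neg_mul_Ioi ha hc]; positivity)

lemma rpow_sub_one_mul_pow {t : ℝ} (ht : 0 < t) (s : ℝ) (k : ℕ) :
    t ^ (s - 1) * t ^ k = t ^ ((k : ℝ) + s - 1) := by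
  rw [← rpow_natCast, ← rpow_add ht]
  ring_nf

section Watson

variable {f : ℝ → ℝ} {s c C : ℝ}

lemma norm_rpow_mul_exp_mul_le {m : ℕ} {t : ℝ} (ht : 0 < t) (hft : |f t| ≤ C * t ^ m) :
    ‖t ^ (s - 1) * exp (-(c * t)) * f t‖ ≤
      C * (t ^ ((m : ℝ) + s - 1) * exp (-(c * t))) := by
  rw [norm_mul, norm_mul, Real.norm_of_nonneg (by positivity),
    Real.norm_of_nonneg (by positivity), Real.norm_eq_abs, ← rpow_sub_one_mul_pow ht]
  calc t ^ (s - 1) * exp (-(c * t)) * |f t| ≤ t ^ (s - 1) * exp (-(c * t)) * (C * t ^ m) := by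
        gcongr
    _ = C * (t ^ (s - 1) * t ^ m * exp (-(c * t))) := by ring

lemma integrableOn_rpow_mul_exp_mul_of_abs_le {m : ℕ} (hs : 0 < s) (hc : 0 < c)
    (hf : AEStronglyMeasurable f (volume.restrict (Ioi 0)))
    (hbound : ∀ t > 0, |f t| ≤ C * t ^ m) :
    IntegrableOn (fun t => t ^ (s - 1) * exp (-(c * t)) * f t) (Ioi 0) := by
  refine Integrable.mono' ((integrableOn_rpow_mul_exp_neg_mul (a := m + s) (by positivity)
    hc).const_mul C) ?_ ((ae_restrict_mem measurableSet_Ioi).mono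
      fun t ht => norm_rpow_mul_exp_mul_le ht (hbound t ht))
  exact ((by fun_prop : Measurable fun t : ℝ => t ^ (s - 1) * exp (-(c * t)))
    |>.aestronglyMeasurable).mul hf

/-- Watson's lemma with an explicit error bound. -/
theorem abs_integral_sub_sum_Gamma_le (hs : 0 < s) (hc : 0 < c)
    (hf : AEStronglyMeasurable f (volume.restrict (Ioi 0))) (b : ℕ → ℝ) (M : ℕ)
    (hbound : ∀ t > 0, |f t - ∑ k ∈ Finset.range M, b k * t ^ k| ≤ C * t ^ M) :
    |(∫ t in Ioi 0, t ^ (s - 1) * exp (-(c * t)) * f t) -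
        ∑ k ∈ Finset.range M, b k * ((1 / c) ^ ((k : ℝ) + s) * Gamma (k + s))| ≤
      C * ((1 / c) ^ ((M : ℝ) + s) * Gamma (M + s)) := by
  have hr : IntegrableOn (fun t => t ^ (s - 1) * exp (-(c * t)) *
      (f t - ∑ k ∈ Finset.range M, b k * t ^ k)) (Ioi 0) :=
    integrableOn_rpow_mul_exp_mul_of_abs_le hs hc
      (hf.sub (by fun_prop : Continuous fun t : ℝ => _).aestronglyMeasurable) hbound
  have hpoly (k : ℕ) :
      IntegrableOn (fun t => b k * (t ^ ((k : ℝ) + s - 1) * exp (-(c * t)))) (Ioi 0) :=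
    (integrableOn_rpow_mul_exp_neg_mul (by positivity) hc).const_mul _
  have hsplit : ∀ t ∈ Ioi (0 : ℝ), t ^ (s - 1) * exp (-(c * t)) * f t =
      ∑ k ∈ Finset.range M, b k * (t ^ ((k : ℝ) + s - 1) * exp (-(c * t))) +
        t ^ (s - 1) * exp (-(c * t)) * (f t - ∑ k ∈ Finset.range M, b k * t ^ k) := by
    intro t ht
    have hsum : ∑ k ∈ Finset.range M, b k * (t ^ ((k : ℝ) + s - 1) * exp (-(c * t))) =
        t ^ (s - 1) * exp (-(c * t)) * ∑ k ∈ Finset.range M, b k * t ^ k := by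
      rw [Finset.mul_sum]
      refine Finset.sum_congr rfl fun k _ => ?_
      rw [← rpow_sub_one_mul_pow ht]
      ring
    rw [hsum]
    ring
  rw [setIntegral_congr_fun measurableSet_Ioi hsplit,
    integral_add (integrable_finsetSum _ fun k _ => hpoly k) hr,
    integral_finsetSum _ fun k _ => hpoly k,
    Finset.sum_congr rfl fun k _ => by
      rw [integral_const_mul, integral_rpow_mul_exp_neg_mul_Ioi (by positivity) hc],
    add_sub_cancel_left, ← integral_rpow_mul_exp_neg_mul_Ioi (by positivity) hc,
    ← integral_const_mul, ← Real.norm_eq_abs]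
  exact norm_integral_le_of_norm_le
    ((integrableOn_rpow_mul_exp_neg_mul (by positivity) hc).const_mul C)
    ((ae_restrict_mem measurableSet_Ioi).mono fun t ht =>
      norm_rpow_mul_exp_mul_le (f := fun t => f t - ∑ k ∈ Finset.range M, b k * t ^ k) ht
        (hbound t ht))

theorem isBigO_integral_sub_sum_Gamma (hs : 0 < s)
    (hf : AEStronglyMeasurable f (volume.restrict (Ioi 0))) (b : ℕ → ℝ) (M : ℕ)
    (hbound : ∀ t > 0, |f t - ∑ k ∈ Finset.range M, b k * t ^ k| ≤ C * t ^ M) :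
    (fun c => (∫ t in Ioi 0, t ^ (s - 1) * exp (-(c * t)) * f t) -
        ∑ k ∈ Finset.range M, b k * ((1 / c) ^ ((k : ℝ) + s) * Gamma (k + s))) =O[atTop]
      fun c => c ^ (-((M : ℝ) + s)) := by
  refine .of_bound (C * Gamma (M + s)) ?_
  filter_upwards [eventually_gt_atTop 0] with c hc
  rw [Real.norm_eq_abs, Real.norm_of_nonneg (by positivity), rpow_neg hc.le, ← inv_rpow hc.le,
    ← one_div, mul_right_comm, mul_assoc]
  exact abs_integral_sub_sum_Gamma_le hs hc hf b M hbound

end Watson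

noncomputable def invSqrtTwoAddCoeff (k : ℕ) : ℝ :=
  negBinomCoeff (1 / 2) k / (√2 * 2 ^ k)

lemma abs_two_add_rpow_neg_half_sub_le (M : ℕ) {t : ℝ} (ht : 0 ≤ t) :
    |(2 + t) ^ (-(1 / 2 : ℝ)) - ∑ k ∈ Finset.range M, invSqrtTwoAddCoeff k * t ^ k| ≤
      |invSqrtTwoAddCoeff M| * t ^ M := by
  have hsqrt : (2 : ℝ) ^ (-(1 / 2 : ℝ)) = (√2)⁻¹ := by
    rw [rpow_neg zero_le_two, sqrt_eq_rpow]
  have hpow : (2 + t) ^ (-(1 / 2 : ℝ)) = (√2)⁻¹ * (1 + t / 2) ^ (-(1 / 2 : ℝ)) := by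
    rw [← hsqrt, ← mul_rpow zero_le_two (by positivity)]
    ring_nf
  have hsum : ∑ k ∈ Finset.range M, invSqrtTwoAddCoeff k * t ^ k =
      (√2)⁻¹ * negBinomPoly (1 / 2) M (t / 2) := by
    rw [negBinomPoly, Finset.mul_sum]
    refine Finset.sum_congr rfl fun k _ => ?_
    rw [invSqrtTwoAddCoeff, div_pow]
    field_simp
  rw [hpow, hsum, ← mul_sub, abs_mul, abs_inv, abs_of_pos (by positivity : (0 : ℝ) < √2),
    invSqrtTwoAddCoeff, abs_div, abs_of_pos (by positivity : (0 : ℝ) < √2 * 2 ^ M)]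
  calc (√2)⁻¹ * |(1 + t / 2) ^ (-(1 / 2 : ℝ)) - negBinomPoly (1 / 2) M (t / 2)|
      ≤ (√2)⁻¹ * (|negBinomCoeff (1 / 2) M| * (t / 2) ^ M) :=
        mul_le_mul_of_nonneg_left
          (abs_one_add_rpow_neg_sub_negBinomPoly_le M one_half_pos (by positivity)) (by positivity)
    _ = |negBinomCoeff (1 / 2) M| / (√2 * 2 ^ M) * t ^ M := by
      rw [div_pow]
      field_simp

lemma image_cosh_sub_one_Ioi : (fun y => cosh y - 1) '' Ioi 0 = Ioi 0 := by
  ext t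
  refine ⟨?_, fun ht => ⟨arcosh (1 + t), arcosh_pos (by linarith [mem_Ioi.mp ht]), ?_⟩⟩
  · rintro ⟨y, hy, rfl⟩
    exact sub_pos.mpr (one_lt_cosh.mpr (mem_Ioi.mp hy).ne')
  · show cosh (arcosh (1 + t)) - 1 = t
    rw [cosh_arcosh (by linarith [mem_Ioi.mp ht])]
    ring

lemma integral_comp_cosh_sub_one_mul_sinh (g : ℝ → ℝ) :
    ∫ y in Ioi 0, g (cosh y - 1) * sinh y = ∫ t in Ioi 0, g t := by
  have hinj : InjOn (fun y => cosh y - 1) (Ioi 0) := fun a ha b hb hab =>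
    cosh_injOn.mono Ioi_subset_Ici_self ha hb (sub_left_inj.mp hab)
  calc ∫ y in Ioi 0, g (cosh y - 1) * sinh y = ∫ y in Ioi 0, |sinh y| • g (cosh y - 1) :=
        setIntegral_congr_fun measurableSet_Ioi fun y (hy : (0 : ℝ) < y) => by
          rw [smul_eq_mul, abs_of_pos (sinh_pos_iff.mpr hy), mul_comm]
    _ = ∫ t in (fun y => cosh y - 1) '' Ioi 0, g t := (integral_image_eq_integral_abs_deriv_smul
        measurableSet_Ioi (fun y _ => ((hasDerivAt_cosh y).sub_const 1).hasDerivWithinAt)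
        hinj g).symm
    _ = ∫ t in Ioi 0, g t := by rw [image_cosh_sub_one_Ioi]

lemma integrableOn_rpow_mul_exp_mul_two_add_rpow {s c : ℝ} (hs : 0 < s) (hc : 0 < c) :
    IntegrableOn (fun t => t ^ (s - 1) * exp (-(c * t)) * (2 + t) ^ (-(1 / 2 : ℝ)))
      (Ioi 0) := by
  refine integrableOn_rpow_mul_exp_mul_of_abs_le (C := 1) (m := 0) hs hc
    (by fun_prop : Measurable fun t : ℝ => (2 + t) ^ (-(1 / 2 : ℝ))).aestronglyMeasurable
    fun t ht => ?_
  rw [pow_zero, mul_one, abs_of_pos (by positivity)]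
  exact rpow_le_one_of_one_le_of_nonpos (by linarith) (by norm_num)

lemma integral_exp_neg_mul_cosh_mul_cosh {c : ℝ} (hc : 0 < c) :
    ∫ y, exp (-c * cosh y) * cosh y =
      2 * exp (-c) *
        ((∫ t in Ioi 0, t ^ ((1 / 2 : ℝ) - 1) * exp (-(c * t)) * (2 + t) ^ (-(1 / 2 : ℝ))) +
          ∫ t in Ioi 0, t ^ ((3 / 2 : ℝ) - 1) * exp (-(c * t)) * (2 + t) ^ (-(1 / 2 : ℝ))) := by
  have heven := integral_comp_abs (f := fun y => exp (-c * cosh y) * cosh y)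
  simp only [cosh_abs] at heven
  rw [heven, mul_assoc,
    ← integral_add (integrableOn_rpow_mul_exp_mul_two_add_rpow (by norm_num) hc)
      (integrableOn_rpow_mul_exp_mul_two_add_rpow (by norm_num) hc),
    ← integral_const_mul (exp (-c))]
  congr 1
  symm
  rw [← integral_comp_cosh_sub_one_mul_sinh]
  refine setIntegral_congr_fun measurableSet_Ioi fun y hy => ?_
  rw [mem_Ioi] at hy
  have hsinh : 0 < sinh y := sinh_pos_iff.mpr hy
  set t := cosh y - 1
  have ht : 0 < t := sub_pos.mpr (one_lt_cosh.mpr hy.ne')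
  have hcosh : cosh y = 1 + t := by ring
  have hsqrt : √t * √(2 + t) = sinh y := by
    rw [← sqrt_mul ht.le, show t * (2 + t) = sinh y ^ 2 by rw [sinh_sq, hcosh]; ring,
      sqrt_sq hsinh.le]
  have hexp : exp (-c) * exp (-(c * t)) = exp (-c * cosh y) := by
    rw [← exp_add, hcosh]
    ring_nf
  rw [show (1 / 2 : ℝ) - 1 = -(1 / 2) by norm_num, show (3 / 2 : ℝ) - 1 = 1 / 2 by norm_num,
    rpow_neg ht.le, rpow_neg (by positivity), ← sqrt_eq_rpow, ← sqrt_eq_rpow, ← hsqrt, ← hexp,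
    hcosh]
  have : √t ≠ 0 := by positivity
  have : √(2 + t) ≠ 0 := by positivity
  field_simp
  rw [sq_sqrt ht.le]

lemma two_mul_invSqrtTwoAddCoeff_mul_Gamma (k : ℕ) :
    2 * invSqrtTwoAddCoeff k * Gamma (k + 1 / 2) =
      √(2 * π) * ((-1) ^ k * oddDoubleFactorial k ^ 2 / (k ! * 8 ^ k)) := by
  have h8 : (8 : ℝ) ^ k = 2 ^ k * 2 ^ k * 2 ^ k := by rw [← mul_pow, ← mul_pow]; norm_num
  rw [invSqrtTwoAddCoeff, negBinomCoeff_one_half, Gamma_nat_add_half_eq,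
    sqrt_mul zero_le_two, h8]
  field_simp
  rw [sq_sqrt zero_le_two]
  ring

lemma sqrt_two_pi_div_mul_term_eq {c : ℝ} (hc : 0 < c) (k : ℕ) :
    √(2 * π / c) * ((-1) ^ k * oddDoubleFactorial k ^ 2 / (k ! * 8 ^ k * c ^ k) *
        (1 + (2 * k + 1) / (2 * c))) =
      2 * (invSqrtTwoAddCoeff k * ((1 / c) ^ ((k : ℝ) + 1 / 2) * Gamma (k + 1 / 2)) +
        invSqrtTwoAddCoeff k * ((1 / c) ^ ((k : ℝ) + 3 / 2) * Gamma (k + 3 / 2))) := by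
  have hpow : (1 / c) ^ ((k : ℝ) + 1 / 2) = √(1 / c) / c ^ k := by
    rw [rpow_add (by positivity), rpow_natCast, sqrt_eq_rpow, div_pow, one_pow]
    ring
  have hsqrt : √(2 * π / c) = √(2 * π) * √(1 / c) := by
    rw [← sqrt_mul (by positivity)]
    ring_nf
  rw [show (k : ℝ) + 3 / 2 = k + 1 / 2 + 1 by ring, rpow_add_one (by positivity),
    Gamma_add_one (by positivity), hpow, hsqrt]
  linear_combination (-(√(1 / c) / c ^ k) * (1 + (2 * k + 1) / (2 * c))) *
    two_mul_invSqrtTwoAddCoeff_mul_Gamma k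

lemma isBigO_rpow_rpow_atTop_of_le {a b : ℝ} (hab : a ≤ b) :
    (fun c : ℝ => c ^ a) =O[atTop] fun c => c ^ b := by
  refine .of_bound 1 ?_
  filter_upwards [eventually_ge_atTop 1] with c hc
  rw [one_mul, Real.norm_of_nonneg (by positivity), Real.norm_of_nonneg (by positivity)]
  exact rpow_le_rpow_of_exponent_le hc hab

lemma sqrt_two_pi_div_mul_sum_eq {c : ℝ} (hc : 0 < c) (M : ℕ) :
    √(2 * π / c) * ∑ n ∈ Finset.range M, (-1) ^ n * oddDoubleFactorial n ^ 2 /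
        (n ! * 8 ^ n * c ^ n) * (1 + (2 * n + 1) / (2 * c)) =
      2 * (∑ k ∈ Finset.range M, invSqrtTwoAddCoeff k * ((1 / c) ^ ((k : ℝ) + 1 / 2) *
          Gamma (k + 1 / 2)) +
        ∑ k ∈ Finset.range M, invSqrtTwoAddCoeff k * ((1 / c) ^ ((k : ℝ) + 3 / 2) *
          Gamma (k + 3 / 2))) := by
  rw [Finset.mul_sum, ← Finset.sum_add_distrib, Finset.mul_sum]
  exact Finset.sum_congr rfl fun k _ => sqrt_two_pi_div_mul_term_eq hc k

/-- Stationary phase expansion of the oscillating integral `∫ e^{−c cosh y} cosh y dy`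
(the derivative of the mirror oscillatory integral of ℙ¹ with respect to the Kähler
parameter) through the critical point `P₂`. -/
theorem stationary_phase_expansion_derivative (N : ℕ) :
    (fun c : ℝ =>
        (∫ y : ℝ, Real.exp (-c * Real.cosh y) * Real.cosh y) -
          Real.sqrt (2 * Real.pi / c) * Real.exp (-c) *
            ∑ n ∈ Finset.range (N + 1),
              (-1 : ℝ) ^ n * (oddDoubleFactorial n) ^ 2 /
                ((Nat.factorial n : ℝ) * 8 ^ n * c ^ n) *
                (1 + (2 * (n : ℝ) + 1) / (2 * c))) =O[atTop]
      fun c : ℝ => Real.exp (-c) * c ^ (-(N : ℝ) - 3 / 2) := by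
  have hmeas : AEStronglyMeasurable (fun t : ℝ => (2 + t) ^ (-(1 / 2 : ℝ)))
      (volume.restrict (Ioi 0)) :=
    (by fun_prop : Measurable fun t : ℝ => (2 + t) ^ (-(1 / 2 : ℝ))).aestronglyMeasurable
  have hbound (t : ℝ) (ht : t > 0) := abs_two_add_rpow_neg_half_sub_le (N + 1) ht.le
  have h₁ := isBigO_integral_sub_sum_Gamma one_half_pos hmeas _ (N + 1) hbound
  have h₂ := isBigO_integral_sub_sum_Gamma (s := 3 / 2) (by norm_num) hmeas _ (N + 1) hbound
  rw [show -(((N + 1 : ℕ) : ℝ) + 1 / 2) = -(N : ℝ) - 3 / 2 by push_cast; ring] at h₁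
  replace h₂ :=
    h₂.trans (isBigO_rpow_rpow_atTop_of_le (b := -(N : ℝ) - 3 / 2) (by push_cast; linarith))
  refine ((isBigO_refl (fun c => exp (-c)) atTop).mul ((h₁.add h₂).const_mul_left 2)).congr'
    ?_ .rfl
  filter_upwards [eventually_gt_atTop 0] with c hc
  rw [integral_exp_neg_mul_cosh_mul_cosh hc, mul_right_comm (√(2 * π / c)),
    sqrt_two_pi_div_mul_sum_eq hc]
  ring
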